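/- Let S⊆V be a group that is T-cohesive with substitutes for T⊆A, and consider an execution of SRX. For each step t let B_t be the set of projects selected by SRX up to and including step t, let T_t = {a∈T : g(a) ∩ B_t = ∅} be the projects of T for which neither the project nor any of its substitutes has been selected, and let c_tmin be the cost of the cheapest project in T_{t−1} divided by |S|. If at step t it holds that T_t ≠ ∅ and every voter i∈S has remaining budget b_i(t) ≥ c_tmin, then every voter in S pays at most c_tmin toward the project chosen by SRX at step t. -/

import Mathlib

open Finset

/-- A voter's preference: a partition of her desired projects into groups of
substitutes, together with a marginal utility function per group
(`margU g j` is the marginal utility of the `j`-th funded project of group `g`). -/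
structure VoterPref (A : Type*) [DecidableEq A] where
  parts : Finset (Finset A)
  margU : Finset A → ℕ → ℝ

namespace VoterPref

variable {A : Type*} [DecidableEq A]

/-- `A(i)` : the set of desired projects of the voter. -/
def desired (v : VoterPref A) : Finset A := v.parts.sup id

/-- Well-formedness: groups are nonempty and pairwise disjoint, and marginal
utilities are nonnegative and nonincreasing. -/
def Valid (v : VoterPref A) : Prop :=
  (∀ g ∈ v.parts, g.Nonempty) ∧
  (∀ g₁ ∈ v.parts, ∀ g₂ ∈ v.parts, g₁ ≠ g₂ → Disjoint g₁ g₂) ∧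
  (∀ g ∈ v.parts, ∀ j : ℕ, 0 ≤ v.margU g j) ∧
  (∀ g ∈ v.parts, ∀ j : ℕ, v.margU g (j + 1) ≤ v.margU g j)

/-- The utility of a bundle `B`:  `u_i(B) = Σ_{g} Σ_{j=1}^{|g∩B|} u_{i,g}(j)`. -/
def util (v : VoterPref A) (B : Finset A) : ℝ :=
  ∑ g ∈ v.parts, ∑ j ∈ Finset.Icc 1 (g ∩ B).card, v.margU g j

/-- Marginal utility of project `p` given the already selected bundle `B`. -/
def margUtil (v : VoterPref A) (B : Finset A) (p : A) : ℝ :=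
  v.util (insert p B) - v.util B

/-- `p₁` and `p₂` are substitutes for the voter. -/
def sameGroup (v : VoterPref A) (p₁ p₂ : A) : Prop :=
  ∃ g ∈ v.parts, p₁ ∈ g ∧ p₂ ∈ g

end VoterPref

/-- A participatory budgeting instance `E = (V, A, cost, L)` together with the
voters' preferences. -/
structure PB (V A : Type*) [DecidableEq A] where
  cost : A → ℝ
  budget : ℝ
  pref : V → VoterPref A

noncomputable section
open scoped Classical

variable {V A : Type*} [Fintype V] [Fintype A] [DecidableEq A]

/-- `S` is `T`-cohesive with substitutes: `S` can afford `T` with its share of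
the budget, every voter in `S` desires every project of `T`, and no two
distinct projects of `T` are substitutes for any voter of `S`. -/
def TCohesiveSub (E : PB V A) (S : Finset V) (T : Finset A) : Prop :=
  (∑ p ∈ T, E.cost p) ≤ (E.budget / (Fintype.card V : ℝ)) * S.card ∧
  (∀ i ∈ S, T ⊆ (E.pref i).desired) ∧
  (∀ i ∈ S, ∀ p₁ ∈ T, ∀ p₂ ∈ T, p₁ ≠ p₂ → ¬ (E.pref i).sameGroup p₁ p₂)

/-- `p` is `q`-affordable given remaining budgets `b` and current utilities `U`. -/
def Affordable (E : PB V A) (U : V → A → ℝ) (b : V → ℝ) (p : A) (q : ℝ) : Prop :=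
  0 ≤ q ∧ E.cost p ≤ ∑ i, min (b i) (U i p * q)

/-- The minimal `q` for which `p` is `q`-affordable (junk value if none exists). -/
def qmin (E : PB V A) (U : V → A → ℝ) (b : V → ℝ) (p : A) : ℝ :=
  sInf {q | Affordable E U b p q}

/-- The set of unselected projects that are `q`-affordable for some `q`. -/
def affordSet (E : PB V A) (U : V → A → ℝ) (b : V → ℝ) (B : Finset A) : Finset A :=
  Finset.univ.filter fun p => p ∉ B ∧ ∃ q, Affordable E U b p q

/-- The project chosen at the current step: among affordable unselected
projects, minimize the minimal `q`, breaking ties by the (lexicographic)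
linear order on `A`; `none` if no project is affordable. -/
def choice [LinearOrder A] (E : PB V A) (U : V → A → ℝ) (b : V → ℝ) (B : Finset A) :
    Option A :=
  if h : (affordSet E U b B).Nonempty then
    some (((affordSet E U b B).filter fun p =>
        qmin E U b p = (affordSet E U b B).inf' h (qmin E U b)).min'
      (by
        obtain ⟨p, hp, hq⟩ := Finset.exists_mem_eq_inf' h (qmin E U b)
        exact ⟨p, Finset.mem_filter.mpr ⟨hp, hq.symm⟩⟩))
  else none

/-- The state (selected bundle, remaining budgets) of the generalized Rule X
after `t` steps, where `Ufun B i p` is the utility voter `i` assigns to project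
`p` when the bundle `B` has already been selected. -/
def state [LinearOrder A] (E : PB V A) (Ufun : Finset A → V → A → ℝ) :
    ℕ → Finset A × (V → ℝ)
  | 0 => (∅, fun _ => E.budget / (Fintype.card V : ℝ))
  | t + 1 =>
    let st := state E Ufun t
    match choice E (Ufun st.1) st.2 st.1 with
    | none => st
    | some p =>
        (insert p st.1,
          fun i => st.2 i - min (st.2 i) (Ufun st.1 i p * qmin E (Ufun st.1) st.2 p))

/-- The output of the generalized Rule X (after `|A|` steps the state is final). -/
def mechOutput [LinearOrder A] (E : PB V A) (Ufun : Finset A → V → A → ℝ) : Finset A :=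
  (state E Ufun (Fintype.card A)).1

/-- SRX uses, at every step, the current marginal utilities. -/
def srxU (E : PB V A) : Finset A → V → A → ℝ := fun B i p => (E.pref i).margUtil B p

/-- The Substitute Rule X mechanism. -/
def SRX [LinearOrder A] (E : PB V A) : Finset A := mechOutput E (srxU E)

/-- Rule X uses, throughout, utility 1 for every desired project. -/
def rxU (E : PB V A) : Finset A → V → A → ℝ :=
  fun _ i p => if p ∈ (E.pref i).desired then 1 else 0

/-- The (original) Rule X mechanism. -/
def RX [LinearOrder A] (E : PB V A) : Finset A := mechOutput E (rxU E)

/-- Global substitutes: all voters share one common partition `P` of the whole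
project set, each voter approving a sub-collection of its groups. -/
def GlobalSubs (E : PB V A) (P : Finset (Finset A)) : Prop :=
  (∀ g ∈ P, g.Nonempty) ∧
  (∀ g₁ ∈ P, ∀ g₂ ∈ P, g₁ ≠ g₂ → Disjoint g₁ g₂) ∧
  P.sup id = Finset.univ ∧
  (∀ i : V, (E.pref i).parts ⊆ P)

end

/-- `T_t`-style set: the projects of `T` such that neither the project nor any
of its substitutes (w.r.t. the common partition `P`) belongs to `B`. -/
def Tleft {A : Type*} [DecidableEq A] (P : Finset (Finset A)) (T B : Finset A) :
    Finset A :=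
  T.filter fun a => ∀ g ∈ P, a ∈ g → ∀ b ∈ g, b ∉ B

/-!
Let `a` be a cheapest project of `T_{t-1}`, of cost `c`. No substitute of `a` has been funded
yet, so every voter of `S` still derives the full utility `I` from `a`; as each of them can pay
`c / |S|`, the project `a` is `q₀`-affordable for `q₀ = c / (|S| I)`. SRX picks a project `p`
whose least affording `q` is at most `q₀`, and a voter's marginal utility for `p` is at most `I`,
so every voter pays at most `I q₀ = c / |S|`.
-/

namespace VoterPref

variable {A : Type*} [DecidableEq A] {v : VoterPref A} {B g : Finset A} {p : A}

theorem margU_le_margU_one (hv : v.Valid) (hg : g ∈ v.parts) (k : ℕ) :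
    v.margU g (k + 1) ≤ v.margU g 1 :=
  antitone_nat_of_succ_le (hv.2.2.2 g hg) (by omega)

theorem margUtil_of_mem (hpB : p ∈ B) : v.margUtil B p = 0 := by
  rw [margUtil, insert_eq_of_mem hpB, sub_self]

theorem margUtil_of_forall_notMem (hp : ∀ g ∈ v.parts, p ∉ g) : v.margUtil B p = 0 := by
  rw [margUtil, util, util, sub_eq_zero]
  exact sum_congr rfl fun g hg => by rw [inter_insert_of_notMem (hp g hg)]

theorem margUtil_eq_margU (hv : v.Valid) (hpB : p ∉ B) (hg : g ∈ v.parts) (hpg : p ∈ g) :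
    v.margUtil B p = v.margU g (#(g ∩ B) + 1) := by
  rw [margUtil, util, util, ← sum_sub_distrib, sum_eq_single_of_mem g hg]
  · rw [inter_insert_of_mem hpg, card_insert_of_notMem fun h => hpB (mem_inter.mp h).2,
      sum_Icc_succ_top (by omega), add_sub_cancel_left]
  · intro g' hg' hne
    have hpg' : p ∉ g' := fun h => disjoint_left.mp (hv.2.1 g' hg' g hg hne) h hpg
    rw [inter_insert_of_notMem hpg', sub_self]

theorem margUtil_eq_margU_one (hv : v.Valid) (hg : g ∈ v.parts) (hpg : p ∈ g)
    (hgB : Disjoint g B) : v.margUtil B p = v.margU g 1 := by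
  rw [margUtil_eq_margU hv (disjoint_left.mp hgB hpg) hg hpg,
    disjoint_iff_inter_eq_empty.mp hgB, card_empty]

theorem margUtil_nonneg (hv : v.Valid) (B : Finset A) (p : A) : 0 ≤ v.margUtil B p := by
  by_cases hpB : p ∈ B
  · exact (margUtil_of_mem hpB).ge
  by_cases hp : ∃ g ∈ v.parts, p ∈ g
  · obtain ⟨g, hg, hpg⟩ := hp
    rw [margUtil_eq_margU hv hpB hg hpg]
    exact hv.2.2.1 g hg _
  · push Not at hp
    exact (margUtil_of_forall_notMem hp).ge

theorem margUtil_le {I : ℝ} (hv : v.Valid) (hI : 0 ≤ I)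
    (hfirst : ∀ g ∈ v.parts, v.margU g 1 = I)
    (B : Finset A) (p : A) : v.margUtil B p ≤ I := by
  by_cases hpB : p ∈ B
  · exact (margUtil_of_mem hpB).trans_le hI
  by_cases hp : ∃ g ∈ v.parts, p ∈ g
  · obtain ⟨g, hg, hpg⟩ := hp
    rw [margUtil_eq_margU hv hpB hg hpg, ← hfirst g hg]
    exact margU_le_margU_one hv hg _
  · push Not at hp
    exact (margUtil_of_forall_notMem hp).trans_le hI

end VoterPref

theorem Tleft_subset {A : Type*} [DecidableEq A] (P : Finset (Finset A)) (T B : Finset A) :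
    Tleft P T B ⊆ T :=
  filter_subset _ _

theorem disjoint_of_mem_Tleft {A : Type*} [DecidableEq A] {P : Finset (Finset A)}
    {T B g : Finset A} {a : A} (ha : a ∈ Tleft P T B) (hg : g ∈ P) (hag : a ∈ g) :
    Disjoint g B :=
  disjoint_left.mpr fun _ hb => (mem_filter.mp ha).2 g hg hag _ hb

section RuleX

open scoped Classical

variable {V A : Type*} [Fintype V] [DecidableEq A] {E : PB V A}
  {U : V → A → ℝ} {b : V → ℝ} {p : A} {q : ℝ}

theorem qmin_le (hq : Affordable E U b p q) : qmin E U b p ≤ q :=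
  csInf_le ⟨0, fun _ hr => hr.1⟩ hq

theorem qmin_nonneg (h : ∃ q, Affordable E U b p q) : 0 ≤ qmin E U b p :=
  le_csInf h fun _ hr => hr.1

theorem affordable_of_le_sum (S : Finset V) (hq : 0 ≤ q) (hb : ∀ j, 0 ≤ b j)
    (hU : ∀ j, 0 ≤ U j p) (hpay : ∀ j ∈ S, U j p * q ≤ b j)
    (hcost : E.cost p ≤ ∑ j ∈ S, U j p * q) : Affordable E U b p q := by
  refine ⟨hq, hcost.trans ?_⟩
  calc ∑ j ∈ S, U j p * q = ∑ j ∈ S, min (b j) (U j p * q) :=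
        sum_congr rfl fun j hj => (min_eq_right (hpay j hj)).symm
    _ ≤ ∑ j, min (b j) (U j p * q) :=
        sum_le_univ_sum_of_nonneg fun j => le_min (hb j) (mul_nonneg (hU j) hq)

variable [Fintype A]

theorem choice_eq_some [LinearOrder A] {B : Finset A} (h : choice E U b B = some p) :
    p ∈ affordSet E U b B ∧ ∀ a ∈ affordSet E U b B, qmin E U b p ≤ qmin E U b a := by
  unfold choice at h
  split at h
  case isFalse => exact absurd h nofun
  case isTrue hne =>
    obtain ⟨hp, hpq⟩ := mem_filter.mp (Option.some.inj h ▸ min'_mem _ _)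
    exact ⟨hp, fun a ha => hpq ▸ inf'_le _ ha⟩

variable [LinearOrder A] (Ufun : Finset A → V → A → ℝ)

theorem state_budget_nonneg (hb : 0 ≤ E.budget) (t : ℕ) (i : V) :
    0 ≤ (state E Ufun t).2 i := by
  induction t generalizing i with
  | zero => exact div_nonneg hb (Nat.cast_nonneg _)
  | succ t ih =>
    rw [state]
    split
    · exact ih i
    · exact sub_nonneg.mpr (min_le_left _ _)

theorem state_succ_payment_le {I q₀ : ℝ} {a : A} (t : ℕ) (i : V)
    (hUle : ∀ p, Ufun (state E Ufun t).1 i p ≤ I)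
    (hI : 0 ≤ I) (ha : a ∉ (state E Ufun t).1)
    (hafford : Affordable E (Ufun (state E Ufun t).1) (state E Ufun t).2 a q₀) :
    (state E Ufun t).2 i - (state E Ufun (t + 1)).2 i ≤ I * q₀ := by
  have hq₀ : 0 ≤ q₀ := hafford.1
  rw [state]
  split
  · simpa using mul_nonneg hI hq₀
  · next p hch =>
    obtain ⟨hp, hpmin⟩ := choice_eq_some hch
    have haS : a ∈ affordSet E (Ufun (state E Ufun t).1) (state E Ufun t).2 (state E Ufun t).1 :=
      mem_filter.mpr ⟨mem_univ a, ha, q₀, hafford⟩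
    have hq := qmin_nonneg (mem_filter.mp hp).2.2
    rw [sub_sub_cancel]
    calc _ ≤ Ufun (state E Ufun t).1 i p * qmin E _ (state E Ufun t).2 p := min_le_right _ _
      _ ≤ I * q₀ := mul_le_mul (hUle p) ((hpmin a haS).trans (qmin_le hafford)) hq hI

end RuleX

theorem srx_payment_bound_lemma_general
    {V A : Type*} [Fintype V] [Fintype A] [DecidableEq A] [LinearOrder A]
    (E : PB V A) (P : Finset (Finset A)) (I : ℝ)
    (hcost : ∀ p : A, 0 < E.cost p)
    (hbudget : 0 < E.budget)
    (hvalid : ∀ i : V, (E.pref i).Valid)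
    (hI : 0 < I)
    (hfirst : ∀ i : V, ∀ g ∈ (E.pref i).parts, (E.pref i).margU g 1 = I)
    (hglobal : GlobalSubs E P)
    (S : Finset V) (T : Finset A)
    (hco : TCohesiveSub E S T)
    (t : ℕ) (ht : 1 ≤ t)
    (hprev : (Tleft P T (state E (srxU E) (t - 1)).1).Nonempty)
    (hbud : ∀ i ∈ S,
      (Tleft P T (state E (srxU E) (t - 1)).1).inf' hprev E.cost / (S.card : ℝ) ≤
        (state E (srxU E) (t - 1)).2 i) :
    ∀ i ∈ S,
      (state E (srxU E) (t - 1)).2 i - (state E (srxU E) t).2 i ≤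
        (Tleft P T (state E (srxU E) (t - 1)).1).inf' hprev E.cost / (S.card : ℝ) := by
  obtain ⟨a, haT, hca⟩ := exists_mem_eq_inf' hprev E.cost
  rw [hca] at hbud ⊢
  obtain ⟨s, rfl⟩ : ∃ s, t = s + 1 := ⟨t - 1, by omega⟩
  rw [Nat.add_sub_cancel] at haT hbud ⊢
  intro i hi
  set B := (state E (srxU E) s).1
  have hS : (0 : ℝ) < #S := by exact_mod_cast card_pos.mpr ⟨i, hi⟩
  have hgroup : ∀ j ∈ S, ∃ g ∈ (E.pref j).parts, a ∈ g ∧ Disjoint g B := fun j hj => by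
    obtain ⟨g, hg, hag⟩ := mem_sup.mp (hco.2.1 j hj (Tleft_subset P T B haT))
    exact ⟨g, hg, hag, disjoint_of_mem_Tleft haT (hglobal.2.2.2 j hg) hag⟩
  have hUa : ∀ j ∈ S, srxU E B j a = I := fun j hj => by
    obtain ⟨g, hg, hag, hgB⟩ := hgroup j hj
    rw [← hfirst j g hg]
    exact (E.pref j).margUtil_eq_margU_one (hvalid j) hg hag hgB
  have haB : a ∉ B := by
    obtain ⟨g, -, hag, hgB⟩ := hgroup i hi
    exact disjoint_left.mp hgB hag
  have hshare : I * (E.cost a / (#S * I)) = E.cost a / #S := by field_simp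
  have hafford : Affordable E (srxU E B) (state E (srxU E) s).2 a (E.cost a / (#S * I)) := by
    refine affordable_of_le_sum S (div_nonneg (hcost a).le (by positivity))
      (state_budget_nonneg _ hbudget.le s) (fun j => (E.pref j).margUtil_nonneg (hvalid j) B a)
      (fun j hj => ?_) ?_
    · rw [hUa j hj, hshare]
      exact hbud j hj
    · rw [sum_congr rfl fun j hj => by rw [hUa j hj, hshare], sum_const, nsmul_eq_mul,
        mul_div_cancel₀ _ hS.ne']
  rw [← hshare]
  exact state_succ_payment_le (srxU E) s i
    (fun p => (E.pref i).margUtil_le (hvalid i) hI.le (hfirst i) B p) hI.le haB hafford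

/-- Lemma 1: let `S` be `T`-cohesive with substitutes (under global
substitutes) and consider an SRX execution; `B_t = (state E (srxU E) t).1` and
`b_i(t) = (state E (srxU E) (t-1)).2 i` is the budget just before step `t`.
Let `c_tmin` be the cost of the cheapest project of `T_{t-1}` divided by `|S|`.
If at step `t ≥ 1` we have `T_t ≠ ∅` and every `i ∈ S` has `b_i(t) ≥ c_tmin`,
then every voter of `S` pays at most `c_tmin` at step `t`. -/
theorem srx_payment_bound_lemma
    {V A : Type*} [Fintype V] [Fintype A] [DecidableEq A] [LinearOrder A]
    (E : PB V A) (P : Finset (Finset A)) (I : ℝ)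
    (hV : 0 < Fintype.card V)
    (hcost : ∀ p : A, 0 < E.cost p)
    (hbudget : 0 < E.budget)
    (hvalid : ∀ i : V, (E.pref i).Valid)
    (hI : 0 < I)
    (hfirst : ∀ i : V, ∀ g ∈ (E.pref i).parts, (E.pref i).margU g 1 = I)
    (hglobal : GlobalSubs E P)
    (S : Finset V) (T : Finset A)
    (hco : TCohesiveSub E S T)
    (t : ℕ) (ht : 1 ≤ t)
    (hprev : (Tleft P T (state E (srxU E) (t - 1)).1).Nonempty)
    (hcur : (Tleft P T (state E (srxU E) t).1).Nonempty)
    (hbud : ∀ i ∈ S,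
      (Tleft P T (state E (srxU E) (t - 1)).1).inf' hprev E.cost / (S.card : ℝ) ≤
        (state E (srxU E) (t - 1)).2 i) :
    ∀ i ∈ S,
      (state E (srxU E) (t - 1)).2 i - (state E (srxU E) t).2 i ≤
        (Tleft P T (state E (srxU E) (t - 1)).1).inf' hprev E.cost / (S.card : ℝ) :=
  srx_payment_bound_lemma_general E P I hcost hbudget hvalid hI hfirst hglobal S T hco t ht hprev
    hbud
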